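/- Write Q'_{i−1} = Σ_M C_M(e_i) · M, the sum ranging over monomials M in the variables e_r with r ≠ i, where each coefficient C_M(e_i) ∈ Z_p[e_i] has degree ≤ p−1. If there exists a monomial M such that the Fermat reduction (in the variable e_i) of C_M(e_i) · ∏_{l ∈ Z_p ∖ {1, …, Δ+1, α_{i−1}}} (e_i − l) is not the zero polynomial, then the Fermat reduction Q'_i of Q_i = Q_{i−1} · E^i is not the zero polynomial. Equivalently, if Q'_i is the zero polynomial, then for every monomial M the Fermat reduction of C_M(e_i) · ∏_{l ∈ Z_p ∖ {1, …, Δ+1, α_{i−1}}} (e_i − l) is zero. -/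

import Mathlib

/-!
Choose `a ∈ Z_p` at which `C_M(e_i) · ∏_{l ∉ K} (e_i - l)` does not vanish; such an `a` exists
because a nonzero Fermat-reduced univariate polynomial has degree `< p`. Then `a ∈ K` and
`C_M(a) ≠ 0`, so substituting `e_i = a` into `Q'_{i-1}` leaves a nonzero polynomial `S`: its
`M`-coefficient is `C_M(a)`. In a variable `e_l` with `e_l ∈ N_i(e_i)` the degree of `S` is at most
`2 + m < p - 1`, since `C^{P'}` has degree `≤ 2` in every edge variable and each earlier `E^k`
has degree `≤ 1` in `e_l`. Hence `S` has a nonvanishing point `b` with `b_l ≠ a` for all these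
`l`, and at `b` with `e_i = a` both `Q_{i-1}` and `E^i` are nonzero, so `Q_i` is not identically
zero on `Z_p^m`, i.e. `Q'_i ≠ 0`.
-/

open MvPolynomial
open scoped Classical

noncomputable section

/-- Exponent reduction implementing Fermat's relation `x^p ≡ x`:
`0 ↦ 0` and `k ↦ ((k-1) mod (p-1)) + 1` for `k ≥ 1`. -/
def fermatExp (p k : ℕ) : ℕ := if k = 0 then 0 else (k - 1) % (p - 1) + 1

lemma fermatExp_zero (p : ℕ) : fermatExp p 0 = 0 := by simp [fermatExp]

/-- The Fermat reduction `F'` of a multivariate polynomial over `Z_p`: every exponent is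
reduced using `x^p ≡ x`, so that the result has degree `≤ p-1` in each variable. -/
def fermatReduce {σ : Type*} (p : ℕ) (F : MvPolynomial σ (ZMod p)) : MvPolynomial σ (ZMod p) :=
  F.support.sum fun d => monomial (d.mapRange (fermatExp p) (fermatExp_zero p)) (F.coeff d)

/-- Univariate Fermat reduction. -/
def fermatReduceUni (p : ℕ) (f : Polynomial (ZMod p)) : Polynomial (ZMod p) :=
  f.support.sum fun k => Polynomial.monomial (fermatExp p k) (f.coeff k)

/-- `N_e(v_i)`: the edges incident to the vertex `i`. -/
def incidentE {n m : ℕ} (ed : Fin m → Sym2 (Fin n)) (i : Fin n) : Finset (Fin m) :=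
  Finset.univ.filter fun k => i ∈ ed k

/-- `N_i(v_i)`: the neighbours of `v_i` other than `v_1, …, v_{i-1}`. -/
def laterNbrs {n m : ℕ} (ed : Fin m → Sym2 (Fin n)) (i : Fin n) : Finset (Fin n) :=
  Finset.univ.filter fun j => (∃ k, ed k = s(i, j)) ∧ ¬ j < i

/-- `N_i(e_i)`: the edges sharing an endpoint with `e_i`, other than `e_1, …, e_{i-1}`. -/
def laterAdjE {n m : ℕ} (ed : Fin m → Sym2 (Fin n)) (k : Fin m) : Finset (Fin m) :=
  Finset.univ.filter fun l => (l ≠ k ∧ ∃ x, x ∈ ed k ∧ x ∈ ed l) ∧ ¬ l < k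

/-- The polynomial `P` (vertex variables are `Sum.inl`, edge variables are `Sum.inr`). -/
def Ppoly (n m Δ p : ℕ) (ed : Fin m → Sym2 (Fin n)) : MvPolynomial (Fin n ⊕ Fin m) (ZMod p) :=
  ∏ i : Fin n,
    ((∏ j ∈ laterNbrs ed i, (X (Sum.inl i) - X (Sum.inl j))) *
      (∏ k ∈ incidentE ed i, (X (Sum.inl i) - X (Sum.inr k))) *
      (∏ l ∈ Finset.Icc (Δ + 2) p, (X (Sum.inl i) - C (l : ZMod p))))

/-- The coefficient of the vertex-monomial `∏ v_j ^ (d j)` of `F`, as a polynomial in the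
edge variables. -/
def vCoeff {n m p : ℕ} (F : MvPolynomial (Fin n ⊕ Fin m) (ZMod p)) (d : Fin n →₀ ℕ) :
    MvPolynomial (Fin m) (ZMod p) :=
  ((sumAlgEquiv (ZMod p) (Fin n) (Fin m)) F).coeff d

/-- The colour set `K = {1, …, Δ+1} ∪ {α} ⊆ Z_p`. -/
def colorSet (Δ p : ℕ) (α : ZMod p) : Finset (ZMod p) :=
  insert α ((Finset.Icc 1 (Δ + 1)).image fun l : ℕ => (l : ZMod p))

/-- The polynomial `E^k`. -/
def Epoly {n m : ℕ} (Δ p : ℕ) [NeZero p] (ed : Fin m → Sym2 (Fin n)) (α : ZMod p) (k : Fin m) :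
    MvPolynomial (Fin m) (ZMod p) :=
  (∏ l ∈ laterAdjE ed k, (X k - X l)) *
    (∏ c ∈ Finset.univ \ colorSet Δ p α, (X k - C c))

/-- `Q_i = C^{P'} · E^1 ⋯ E^i`; here `i` is the number of edge factors, so `Qpoly … i`
is the paper's `Q_i` (and `Qpoly … 0 = C^{P'}`). -/
def Qpoly {n m : ℕ} (Δ p : ℕ) [NeZero p] (ed : Fin m → Sym2 (Fin n)) (α : ZMod p)
    (CP : MvPolynomial (Fin m) (ZMod p)) (i : ℕ) : MvPolynomial (Fin m) (ZMod p) :=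
  CP * ∏ k ∈ Finset.univ.filter (fun k : Fin m => (k : ℕ) < i), Epoly Δ p ed α k

/-- Fermat reduction in all variables except the variable `j`. -/
def fermatReduceExcept {m : ℕ} (p : ℕ) (j : Fin m) (F : MvPolynomial (Fin m) (ZMod p)) :
    MvPolynomial (Fin m) (ZMod p) :=
  F.support.sum fun d =>
    monomial (Finsupp.filter (fun k => k = j) d +
      Finsupp.mapRange (fermatExp p) (fermatExp_zero p) (Finsupp.filter (fun k => k ≠ j) d))
      (F.coeff d)

/-- Given an exponent vector `d0` for the variables other than `j`, the coefficient in `F` of the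
monomial `∏_{k ≠ j} X_k ^ (d0 k)`, as a univariate polynomial in the variable `j`. -/
def coeffAt {m p : ℕ} (j : Fin m) (d0 : Fin m →₀ ℕ) (F : MvPolynomial (Fin m) (ZMod p)) :
    Polynomial (ZMod p) :=
  (F.support.filter fun d => ∀ k, k ≠ j → d k = d0 k).sum fun d =>
    Polynomial.monomial (d j) (F.coeff d)


section FermatExponent

variable {p : ℕ}

lemma fermatExp_le_self (k : ℕ) : fermatExp p k ≤ k := by
  unfold fermatExp
  split_ifs
  · omega
  · have := Nat.mod_le (k - 1) (p - 1)
    omega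

lemma fermatExp_lt (hp : 1 < p) (k : ℕ) : fermatExp p k < p := by
  unfold fermatExp
  split_ifs
  · omega
  · have := Nat.mod_lt (k - 1) (show 0 < p - 1 by omega)
    omega

lemma pow_fermatExp [Fact p.Prime] (x : ZMod p) (k : ℕ) : x ^ fermatExp p k = x ^ k := by
  unfold fermatExp
  split_ifs with hk
  · rw [hk]
  have hp : 1 ≤ p - 1 := Nat.le_sub_one_of_lt (Fact.out : p.Prime).one_lt
  have hcycle : ∀ j q : ℕ, x ^ (j + 1 + (p - 1) * q) = x ^ (j + 1) := by
    intro j q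
    induction q with
    | zero => simp
    | succ q ih =>
      calc x ^ (j + 1 + (p - 1) * (q + 1)) = x ^ (j + (p - 1) * q) * x ^ p := by
            rw [← pow_add]; congr 1; rw [Nat.mul_succ]; omega
        _ = x ^ (j + 1) := by rw [ZMod.pow_card, ← pow_succ, ← ih]; congr 1; omega
  have hk' : k = (k - 1) % (p - 1) + 1 + (p - 1) * ((k - 1) / (p - 1)) := by
    have := Nat.mod_add_div (k - 1) (p - 1)
    omega
  conv_rhs => rw [hk', hcycle]

end FermatExponent

section FermatReduction

variable {σ : Type*} {p : ℕ}

lemma exists_mem_support_of_mem_support_fermatReduce {F : MvPolynomial σ (ZMod p)}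
    {d' : σ →₀ ℕ} (h : d' ∈ (fermatReduce p F).support) :
    ∃ d ∈ F.support, d.mapRange (fermatExp p) (fermatExp_zero p) = d' := by
  rw [mem_support_iff, fermatReduce, coeff_sum] at h
  obtain ⟨d, hd, hne⟩ := Finset.exists_ne_zero_of_sum_ne_zero h
  rw [coeff_monomial] at hne
  exact ⟨d, hd, of_not_not fun h => hne (if_neg h)⟩

lemma degreeOf_fermatReduce_le (F : MvPolynomial σ (ZMod p)) (j : σ) :
    degreeOf j (fermatReduce p F) ≤ degreeOf j F := by
  refine degreeOf_le_iff.2 fun d' hd' => ?_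
  obtain ⟨d, hd, rfl⟩ := exists_mem_support_of_mem_support_fermatReduce hd'
  exact (fermatExp_le_self (d j)).trans (degreeOf_le_iff.1 le_rfl d hd)

lemma degreeOf_fermatReduce_lt (hp : 1 < p) (F : MvPolynomial σ (ZMod p)) (j : σ) :
    degreeOf j (fermatReduce p F) < p := by
  refine Nat.lt_of_le_sub_one (by omega) (degreeOf_le_iff.2 fun d' hd' => ?_)
  obtain ⟨d, -, rfl⟩ := exists_mem_support_of_mem_support_fermatReduce hd'
  exact Nat.le_sub_one_of_lt (fermatExp_lt hp (d j))

lemma eval_fermatReduce [Fact p.Prime] (F : MvPolynomial σ (ZMod p)) (x : σ → ZMod p) :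
    eval x (fermatReduce p F) = eval x F := by
  conv_rhs => rw [← F.support_sum_monomial_coeff]
  simp only [fermatReduce, map_sum, eval_monomial]
  refine Finset.sum_congr rfl fun d _ => congrArg _ ?_
  rw [Finsupp.prod_mapRange_index fun _ => pow_zero _]
  exact Finsupp.prod_congr fun k _ => pow_fermatExp (x k) (d k)

lemma eval_fermatReduceUni [Fact p.Prime] (f : Polynomial (ZMod p)) (a : ZMod p) :
    (fermatReduceUni p f).eval a = f.eval a := by
  conv_rhs => rw [f.as_sum_support]
  simp only [fermatReduceUni, Polynomial.eval_finsetSum, Polynomial.eval_monomial, pow_fermatExp]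

lemma exists_eval_ne_zero_of_fermatReduceUni_ne_zero [Fact p.Prime] {f : Polynomial (ZMod p)}
    (hf : fermatReduceUni p f ≠ 0) : ∃ a, f.eval a ≠ 0 := by
  have hp := (Fact.out : p.Prime).one_lt
  have hdeg : (fermatReduceUni p f).natDegree < p :=
    lt_of_le_of_lt (Polynomial.natDegree_sum_le_of_forall_le _ _ fun k _ =>
      (Polynomial.natDegree_monomial_le _).trans (Nat.le_sub_one_of_lt (fermatExp_lt hp k)))
      (by omega)
  obtain ⟨a, ha⟩ := Polynomial.exists_eval_ne_zero_of_natDegree_lt_card _ hf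
    (by rw [Cardinal.mk_fintype, ZMod.card]; exact_mod_cast hdeg)
  exact ⟨a, by rwa [eval_fermatReduceUni] at ha⟩

end FermatReduction

lemma degreeOf_prod_X_sub_C_le {σ R ι : Type*} [CommRing R] [Nontrivial R] (s : Finset ι)
    (b : ι → σ) (c : ι → R) (j : σ) :
    degreeOf j (∏ k ∈ s, (X (b k) - C (c k))) ≤ (s.filter (b · = j)).card := by
  classical
  refine (degreeOf_prod_le _ _ _).trans ?_
  rw [Finset.card_filter]
  refine Finset.sum_le_sum fun k _ => (degreeOf_sub_le _ _ _).trans ?_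
  rw [degreeOf_X, degreeOf_C]
  split_ifs <;> simp_all

lemma degreeOf_prod_X_sub_X_le {σ R ι : Type*} [CommRing R] [Nontrivial R] (s : Finset ι)
    {a j : σ} (hj : j ≠ a) (b : ι → σ) :
    degreeOf j (∏ k ∈ s, (X a - X (b k) : MvPolynomial σ R)) ≤ (s.filter (b · = j)).card := by
  classical
  refine (degreeOf_prod_le _ _ _).trans ?_
  rw [Finset.card_filter]
  refine Finset.sum_le_sum fun k _ => (degreeOf_sub_le _ _ _).trans ?_
  rw [degreeOf_X, degreeOf_X, if_neg hj]
  by_cases h : b k = j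
  · simp [h]
  · simp [h, Ne.symm h]

universe u

section Nonvanishing

variable {σ K : Type u} [Field K] [Fintype K] [Finite σ]

lemma exists_eval_ne_zero_of_degreeOf_lt {F : MvPolynomial σ K} (hF : F ≠ 0)
    (hdeg : ∀ j, degreeOf j F < Fintype.card K) : ∃ x, eval x F ≠ 0 := by
  by_contra! h
  exact hF <| eq_zero_of_eval_eq_zero σ K F h fun s hs j =>
    Nat.le_sub_one_of_lt ((degreeOf_le_iff.1 le_rfl s hs).trans_lt (hdeg j))

lemma exists_eval_ne_zero_of_forall_ne [DecidableEq σ] {F : MvPolynomial σ K} (hF : F ≠ 0)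
    (s : Finset σ) (a : K) (hdeg : ∀ j, degreeOf j F < Fintype.card K)
    (hdeg_s : ∀ j ∈ s, degreeOf j F + 1 < Fintype.card K) :
    ∃ x, eval x F ≠ 0 ∧ ∀ l ∈ s, x l ≠ a := by
  -- multiplying by `∏ (X l - a)` keeps every degree below `|K|`, and forces `x l ≠ a` on `s`
  set T := F * ∏ l ∈ s, (X l - C a)
  have hT : T ≠ 0 := mul_ne_zero hF <| Finset.prod_ne_zero_iff.2 fun l _ h => by
    simpa using congrArg (eval fun _ => a + 1) h
  have hTdeg : ∀ j, degreeOf j T < Fintype.card K := by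
    intro j
    refine (degreeOf_mul_le _ _ _).trans_lt ?_
    have := degreeOf_prod_X_sub_C_le s id (fun _ => a) j
    simp only [id, Finset.filter_eq'] at this
    split_ifs at this with hj
    · exact lt_of_le_of_lt (by simpa using this) (hdeg_s j hj)
    · rw [show degreeOf j (∏ l ∈ s, (X l - C a)) = 0 by simpa using this, add_zero]
      exact hdeg j
  obtain ⟨x, hx⟩ := exists_eval_ne_zero_of_degreeOf_lt hT hTdeg
  simp only [T, map_mul, map_prod, map_sub, eval_X, eval_C] at hx
  exact ⟨x, left_ne_zero_of_mul hx, fun l hl => sub_ne_zero.1 <|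
    Finset.prod_ne_zero_iff.1 (right_ne_zero_of_mul hx) l hl⟩

end Nonvanishing

section Substitution

variable {σ R : Type*} [CommSemiring R] [DecidableEq σ]

def substVar (i : σ) (a : R) : MvPolynomial σ R →ₐ[R] MvPolynomial σ R :=
  aeval (Function.update X i (C a))

variable (i : σ) (a : R)

lemma substVar_monomial (d : σ →₀ ℕ) (c : R) :
    substVar i a (monomial d c) = monomial (d.erase i) (c * a ^ d i) := by
  rw [substVar, aeval_monomial]
  conv_lhs => rw [← Finsupp.erase_add_single i d]
  rw [Finsupp.prod_add_index' (fun _ => pow_zero _) (fun _ _ _ => pow_add _ _ _),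
    Finsupp.prod_single_index (h := fun k e => Function.update X i (C a) k ^ e) (pow_zero _),
    Function.update_self, monomial_eq, C_mul, C_pow]
  have herase : (d.erase i).prod (fun k e => Function.update X i (C a) k ^ e) =
      (d.erase i).prod fun k e => (X k : MvPolynomial σ R) ^ e :=
    Finsupp.prod_congr fun k hk => by
      rw [Function.update_of_ne (by simp at hk; exact hk.1)]
  rw [herase, algebraMap_eq]
  ring

lemma substVar_eq_sum (F : MvPolynomial σ R) :
    substVar i a F = ∑ d ∈ F.support, monomial (d.erase i) (F.coeff d * a ^ d i) := by
  conv_lhs => rw [← F.support_sum_monomial_coeff]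
  simp only [map_sum, substVar_monomial]

lemma degreeOf_substVar_le (F : MvPolynomial σ R) (j : σ) :
    degreeOf j (substVar i a F) ≤ degreeOf j F := by
  rw [substVar_eq_sum]
  refine (degreeOf_sum_le _ _ _).trans (Finset.sup_le fun d hd => ?_)
  refine degreeOf_le_iff.2 fun e he => ?_
  rw [Finset.mem_singleton.1 (support_monomial_subset he)]
  calc (d.erase i) j ≤ d j := by rw [Finsupp.erase_apply]; split_ifs <;> omega
    _ ≤ degreeOf j F := degreeOf_le_iff.1 le_rfl d hd

lemma eval_substVar (F : MvPolynomial σ R) (b : σ → R) :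
    eval b (substVar i a F) = eval (Function.update b i a) F := by
  rw [substVar, aeval_eq_bind₁]
  refine (eval₂Hom_bind₁ _ _ _ F).trans (congrArg (eval₂Hom _ · F) (funext fun k => ?_))
  by_cases hk : k = i
  · subst hk; simp
  · simp [hk]

end Substitution

lemma coeff_substVar_eq_eval_coeffAt {m p : ℕ} (i : Fin m) (a : ZMod p)
    (F : MvPolynomial (Fin m) (ZMod p)) {d0 : Fin m →₀ ℕ} (hd0 : d0 i = 0) :
    coeff d0 (substVar i a F) = (coeffAt i d0 F).eval a := by
  rw [substVar_eq_sum, coeff_sum, coeffAt, Polynomial.eval_finsetSum, Finset.sum_filter]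
  refine Finset.sum_congr rfl fun d _ => ?_
  rw [coeff_monomial, Polynomial.eval_monomial]
  refine if_congr ⟨fun h k hk => ?_, fun h => ?_⟩ rfl rfl
  · rw [← h, Finsupp.erase_ne hk]
  · ext k
    by_cases hk : k = i
    · rw [hk, Finsupp.erase_same, hd0]
    · rw [Finsupp.erase_ne hk, h k hk]

section SumEquiv

variable {R σ τ : Type*} [CommSemiring R]

lemma sumAlgEquiv_monomial (s : σ ⊕ τ →₀ ℕ) (a : R) :
    sumAlgEquiv R σ τ (monomial s a) =
      monomial (s.comapDomain Sum.inl Sum.inl_injective.injOn)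
        (monomial (s.comapDomain Sum.inr Sum.inr_injective.injOn) a) := by
  simp [sumAlgEquiv, monomial]

lemma coeff_coeff_sumAlgEquiv (F : MvPolynomial (σ ⊕ τ) R) (d : σ →₀ ℕ) (e : τ →₀ ℕ) :
    coeff e (coeff d (sumAlgEquiv R σ τ F)) = coeff (d.sumElim e) F := by
  classical
  induction F using MvPolynomial.induction_on' with
  | monomial s a =>
    have hsplit : s.comapDomain Sum.inl Sum.inl_injective.injOn = d ∧
        s.comapDomain Sum.inr Sum.inr_injective.injOn = e ↔ s = d.sumElim e := by
      constructor
      · rintro ⟨rfl, rfl⟩; ext (x | x) <;> simp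
      · rintro rfl; constructor <;> ext <;> simp
    rw [sumAlgEquiv_monomial, coeff_monomial, coeff_monomial]
    simp only [← hsplit]
    split_ifs <;> simp_all
  | add f g hf hg => simp only [map_add, coeff_add, hf, hg]

lemma degreeOf_coeff_sumAlgEquiv_le (F : MvPolynomial (σ ⊕ τ) R) (d : σ →₀ ℕ) (l : τ) :
    degreeOf l (coeff d (sumAlgEquiv R σ τ F)) ≤ degreeOf (Sum.inr l) F := by
  refine degreeOf_le_iff.2 fun e he => ?_
  rw [mem_support_iff, coeff_coeff_sumAlgEquiv, ← mem_support_iff] at he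
  simpa using degreeOf_le_iff.1 (le_refl (degreeOf (Sum.inr l) F)) _ he

end SumEquiv

lemma card_filter_mem_sym2_le {α : Type*} [Fintype α] [DecidableEq α] (z : Sym2 α) :
    (Finset.univ.filter (· ∈ z)).card ≤ 2 := by
  induction z using Sym2.ind with
  | _ x y =>
    refine (Finset.card_le_card (t := {x, y}) fun v hv => ?_).trans Finset.card_le_two
    simpa using hv

section EdgeColoring

variable {n m : ℕ} (Δ p : ℕ) [Fact p.Prime] (ed : Fin m → Sym2 (Fin n)) (α : ZMod p)

lemma degreeOf_Ppoly_le (l : Fin m) : degreeOf (Sum.inr l) (Ppoly n m Δ p ed) ≤ 2 := by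
  have hvertex : ∀ v : Fin n, degreeOf (Sum.inr l)
      ((∏ j ∈ laterNbrs ed v, (X (Sum.inl v) - X (Sum.inl j))) *
        (∏ k ∈ incidentE ed v, (X (Sum.inl v) - X (Sum.inr k))) *
        (∏ c ∈ Finset.Icc (Δ + 2) p, (X (Sum.inl v) - C (c : ZMod p)))) ≤
      if v ∈ ed l then 1 else 0 := by
    intro v
    have hne : (Sum.inr l : Fin n ⊕ Fin m) ≠ Sum.inl v := Sum.inr_ne_inl
    have h1 := degreeOf_prod_X_sub_X_le (R := ZMod p) (laterNbrs ed v) hne Sum.inl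
    have h2 := (degreeOf_prod_X_sub_X_le (R := ZMod p) (incidentE ed v) hne Sum.inr).trans_eq
      (show _ = if v ∈ ed l then 1 else 0 by
        simp only [Sum.inr.injEq, Finset.filter_eq']
        split_ifs <;> simp_all [incidentE])
    have h3 := degreeOf_prod_X_sub_C_le (Finset.Icc (Δ + 2) p) (fun _ => Sum.inl v)
      (fun c => (c : ZMod p)) (Sum.inr l)
    simp only [reduceCtorEq, Finset.filter_false, Finset.card_empty, nonpos_iff_eq_zero] at h1 h3
    refine (degreeOf_mul_le _ _ _).trans ?_
    refine (Nat.add_le_add_right (degreeOf_mul_le _ _ _) _).trans ?_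
    omega
  calc degreeOf (Sum.inr l) (Ppoly n m Δ p ed)
      ≤ ∑ v : Fin n, if v ∈ ed l then 1 else 0 :=
        (degreeOf_prod_le _ _ _).trans (Finset.sum_le_sum fun v _ => hvertex v)
    _ = (Finset.univ.filter (· ∈ ed l)).card := by simp
    _ ≤ 2 := card_filter_mem_sym2_le _

lemma lt_of_mem_laterAdjE {k l : Fin m} (hl : l ∈ laterAdjE ed k) : k < l := by
  simp only [laterAdjE, Finset.mem_filter, Finset.mem_univ, true_and, not_lt] at hl
  exact lt_of_le_of_ne hl.2 (Ne.symm hl.1.1)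

lemma degreeOf_Epoly_le {k l : Fin m} (hlk : l ≠ k) : degreeOf l (Epoly Δ p ed α k) ≤ 1 := by
  have h1 := degreeOf_prod_X_sub_X_le (R := ZMod p) (laterAdjE ed k) hlk id
  have h2 := degreeOf_prod_X_sub_C_le (Finset.univ \ colorSet Δ p α) (fun _ => k) id l
  have hcard : ((laterAdjE ed k).filter (id · = l)).card ≤ 1 :=
    Finset.card_le_one.2 fun _ h₁ _ h₂ => by simp_all
  simp only [id_eq, Ne.symm hlk, Finset.filter_false, Finset.card_empty, nonpos_iff_eq_zero] at h2
  rw [Epoly]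
  refine (degreeOf_mul_le _ _ _).trans ?_
  simp only [id] at h1 hcard
  omega

lemma degreeOf_Qpoly_le (CP : MvPolynomial (Fin m) (ZMod p)) {N : ℕ} {l : Fin m} (hl : N ≤ l) :
    degreeOf l (Qpoly Δ p ed α CP N) ≤ degreeOf l CP + m := by
  rw [Qpoly]
  refine (degreeOf_mul_le _ _ _).trans (Nat.add_le_add_left ?_ _)
  refine (degreeOf_prod_le _ _ _).trans ?_
  calc ∑ k ∈ Finset.univ.filter (fun k : Fin m => (k : ℕ) < N), degreeOf l (Epoly Δ p ed α k)
      ≤ ∑ _k ∈ Finset.univ.filter (fun k : Fin m => (k : ℕ) < N), 1 :=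
        Finset.sum_le_sum fun k hk => degreeOf_Epoly_le Δ p ed α fun h => by
          simp only [Finset.mem_filter] at hk; omega
    _ = (Finset.univ.filter fun k : Fin m => (k : ℕ) < N).card := by simp
    _ ≤ m := (Finset.card_le_univ _).trans_eq (Fintype.card_fin m)

lemma eval_Epoly_ne_zero {x : Fin m → ZMod p} {k : Fin m} (hk : x k ∈ colorSet Δ p α)
    (hadj : ∀ l ∈ laterAdjE ed k, x l ≠ x k) : eval x (Epoly Δ p ed α k) ≠ 0 := by
  simp only [Epoly, map_mul, map_prod, map_sub, eval_X, eval_C]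
  exact mul_ne_zero (Finset.prod_ne_zero_iff.2 fun l hl => sub_ne_zero.2 (hadj l hl).symm)
    (Finset.prod_ne_zero_iff.2 fun c hc =>
      sub_ne_zero.2 fun h => (Finset.mem_sdiff.1 hc).2 (h ▸ hk))

lemma Qpoly_succ (CP : MvPolynomial (Fin m) (ZMod p)) (i : Fin m) :
    Qpoly Δ p ed α CP (i + 1) = Qpoly Δ p ed α CP i * Epoly Δ p ed α i := by
  have hrange : Finset.univ.filter (fun k : Fin m => (k : ℕ) < i + 1) =
      insert i (Finset.univ.filter fun k : Fin m => (k : ℕ) < i) := by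
    ext k
    simp only [Finset.mem_filter, Finset.mem_univ, true_and, Finset.mem_insert, Fin.ext_iff]
    omega
  rw [Qpoly, Qpoly, hrange, Finset.prod_insert (by simp)]
  ring

end EdgeColoring

theorem statement12_general (n m Δ p : ℕ) [Fact p.Prime]
    (hp : m ^ 2 * (2 * Δ + 2) ≤ p)
    (ed : Fin m → Sym2 (Fin n))
    (d : Fin n →₀ ℕ) (CP : MvPolynomial (Fin m) (ZMod p))
    (hCP : CP = vCoeff (fermatReduce p (Ppoly n m Δ p ed)) d)
    (α : ZMod p)
    (i : Fin m) :
    (∃ d0 : Fin m →₀ ℕ, d0 i = 0 ∧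
        fermatReduceUni p
          (coeffAt i d0 (fermatReduce p (Qpoly Δ p ed α CP (i : ℕ))) *
            ∏ c ∈ Finset.univ \ colorSet Δ p α, (Polynomial.X - Polynomial.C c)) ≠ 0) →
      fermatReduce p (Qpoly Δ p ed α CP ((i : ℕ) + 1)) ≠ 0 := by
  rintro ⟨d0, hd0, hC⟩ hQ
  have hp1 := (Fact.out : p.Prime).one_lt
  set R := fermatReduce p (Qpoly Δ p ed α CP i)
  obtain ⟨a, ha⟩ := exists_eval_ne_zero_of_fermatReduceUni_ne_zero hC
  simp only [Polynomial.eval_mul, Polynomial.eval_prod, Polynomial.eval_sub, Polynomial.eval_X,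
    Polynomial.eval_C] at ha
  have haK : a ∈ colorSet Δ p α := by
    by_contra h
    exact ha <| mul_eq_zero_of_right _ <|
      Finset.prod_eq_zero (Finset.mem_sdiff.2 ⟨Finset.mem_univ a, h⟩) (sub_self a)
  have hS : substVar i a R ≠ 0 := fun h => left_ne_zero_of_mul ha <| by
    rw [← coeff_substVar_eq_eval_coeffAt i a R hd0, h, coeff_zero]
  have hSdeg (j : Fin m) : degreeOf j (substVar i a R) < p :=
    (degreeOf_substVar_le i a R j).trans_lt (degreeOf_fermatReduce_lt hp1 _ j)
  have hSdeg_adj (l : Fin m) (hl : l ∈ laterAdjE ed i) : degreeOf l (substVar i a R) + 1 < p := by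
    have hil := lt_of_mem_laterAdjE ed hl
    have hCPl : degreeOf l CP ≤ 2 := hCP ▸ (degreeOf_coeff_sumAlgEquiv_le _ d l).trans
      ((degreeOf_fermatReduce_le _ _).trans (degreeOf_Ppoly_le Δ p ed l))
    have hRl := (degreeOf_substVar_le i a R l).trans <| (degreeOf_fermatReduce_le _ l).trans <|
      degreeOf_Qpoly_le Δ p ed α CP (N := i) hil.le
    have hm : 2 ≤ m := by have := l.isLt; omega
    have : m + 3 < p := by nlinarith
    omega
  obtain ⟨b, hb, hba⟩ := exists_eval_ne_zero_of_forall_ne hS (laterAdjE ed i) a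
    (by simpa using hSdeg) (by simpa using hSdeg_adj)
  have hx : eval (Function.update b i a) (Qpoly Δ p ed α CP (i + 1)) ≠ 0 := by
    rw [Qpoly_succ, map_mul, ← eval_fermatReduce, ← eval_substVar]
    refine mul_ne_zero hb (eval_Epoly_ne_zero Δ p ed α (by simpa using haK) fun l hl => ?_)
    rw [Function.update_self, Function.update_of_ne (lt_of_mem_laterAdjE ed hl).ne']
    exact hba l hl
  exact hx (by rw [← eval_fermatReduce, hQ, map_zero])

/-- Remark 3.8 of the paper.  Write the (nonzero) Fermat reduction `Q'_{i-1}`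
as a sum over monomials `M` in the variables `e_r`, `r ≠ i`, with coefficients `C_M(e_i)` that
are univariate of degree `≤ p-1` in `e_i`.  If some monomial `M` (given by an exponent vector
`d0` with `d0 i = 0`) is such that the Fermat reduction (in `e_i`) of
`C_M(e_i)·∏_{l ∈ Z_p ∖ K}(e_i - l)` is nonzero, then the Fermat reduction `Q'_i` of
`Q_i = Q_{i-1}·E^i` is nonzero. -/
theorem statement12 (n m Δ p : ℕ) [Fact p.Prime]
    (hm : 1 ≤ m) (hp : m ^ 2 * (2 * Δ + 2) ≤ p)
    (ed : Fin m → Sym2 (Fin n)) (hinj : Function.Injective ed)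
    (hsimple : ∀ k, ¬ (ed k).IsDiag)
    (hΔ : ∀ i, (incidentE ed i).card ≤ Δ)
    (hΔmax : ∃ i, (incidentE ed i).card = Δ)
    (d : Fin n →₀ ℕ) (CP : MvPolynomial (Fin m) (ZMod p))
    (hCP : CP = vCoeff (fermatReduce p (Ppoly n m Δ p ed)) d) (hCP0 : CP ≠ 0)
    (α : ZMod p) (hα : α ∉ (Finset.range (Δ + 2)).image fun l : ℕ => (l : ZMod p))
    (i : Fin m) (hi : 1 ≤ (i : ℕ))
    (hQprev : fermatReduce p (Qpoly Δ p ed α CP (i : ℕ)) ≠ 0) :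
    (∃ d0 : Fin m →₀ ℕ, d0 i = 0 ∧
        fermatReduceUni p
          (coeffAt i d0 (fermatReduce p (Qpoly Δ p ed α CP (i : ℕ))) *
            ∏ c ∈ Finset.univ \ colorSet Δ p α, (Polynomial.X - Polynomial.C c)) ≠ 0) →
      fermatReduce p (Qpoly Δ p ed α CP ((i : ℕ) + 1)) ≠ 0 :=
  statement12_general n m Δ p hp ed d CP hCP α i
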